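/- Let R(k), k ≥ 0, and R̃(m), m ≥ 0, be real sequences and J(m) ≥ 0, and let (k_m) be a nondecreasing sequence of indices. Suppose that for all m2 ≥ m1 ≥ 1 and all k with k_{m2} ≤ k < k_{m2+1}, R(k) ≤ R(k_{m1}) + J(m1) + R̃(m2) − R̃(m1). If there exist m2 ≥ m1 ≥ 1 such that (a) R̃(m2) − R̃(m1) ≤ −J(m1), and (b) sup_{m ≥ m2} R̃(m) − R̃(m2) ≤ max_{0 ≤ k ≤ k_{m2}} R(k) − R(k_{m1}), then sup_{k ≥ 0} R(k) = max_{0 ≤ k ≤ k_{m2}} R(k). -/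
import Mathlib


open Filter

/-- **deterministic domination lemma for the stopping rule.**
Let `R`, `R̃` be real sequences, `J ≥ 0`, and `k` a nondecreasing (and unbounded) index
sequence such that `R(κ) ≤ R(k_{m1}) + J(m1) + R̃(m2) - R̃(m1)` whenever `m2 ≥ m1 ≥ 1` and
`k_{m2} ≤ κ < k_{m2+1}`.  If for some `m2 ≥ m1 ≥ 1`:
(a) `R̃(m2) - R̃(m1) ≤ -J(m1)`, and
(b) `sup_{m ≥ m2} R̃(m) - R̃(m2) ≤ max_{0 ≤ κ ≤ k_{m2}} R(κ) - R(k_{m1})`,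
then `sup_{κ ≥ 0} R(κ) = max_{0 ≤ κ ≤ k_{m2}} R(κ)`. -/
theorem stopping_rule_domination
    (R Rt : ℕ → ℝ) (J : ℕ → ℝ) (k : ℕ → ℕ)
    (hJ : ∀ m, 0 ≤ J m) (hkmono : Monotone k)
    (hktop : Tendsto k atTop atTop)
    (hdom : ∀ m1 m2 : ℕ, 1 ≤ m1 → m1 ≤ m2 → ∀ κ : ℕ, k m2 ≤ κ → κ < k (m2 + 1) →
      R κ ≤ R (k m1) + J m1 + Rt m2 - Rt m1)
    (m1 m2 : ℕ) (hm1 : 1 ≤ m1) (hm12 : m1 ≤ m2)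
    (ha : Rt m2 - Rt m1 ≤ -J m1)
    (hb : ∀ m, m2 ≤ m → Rt m - Rt m2 ≤
      (Finset.range (k m2 + 1)).sup' (Finset.nonempty_range_iff.2 (Nat.succ_ne_zero _)) R
        - R (k m1)) :
    (⨆ κ : ℕ, R κ) =
      (Finset.range (k m2 + 1)).sup' (Finset.nonempty_range_iff.2 (Nat.succ_ne_zero _)) R := by
  set M := (Finset.range (k m2 + 1)).sup'
      (Finset.nonempty_range_iff.2 (Nat.succ_ne_zero _)) R with hM
  have hbound : ∀ κ, R κ ≤ M := by
    intro κ
    by_cases hκ : κ ≤ k m2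
    · exact Finset.le_sup' R (Finset.mem_range.2 (Nat.lt_succ_of_le hκ))
    · push_neg at hκ
      -- find m ≥ m2 with k m ≤ κ < k (m+1)
      have hex : ∃ n, κ < k n := by
        obtain ⟨n, hn⟩ := (tendsto_atTop.1 hktop (κ + 1)).exists
        exact ⟨n, hn⟩
      classical
      have hκn : κ < k (Nat.find hex) := Nat.find_spec hex
      have hn_gt : m2 < Nat.find hex := by
        by_contra h
        push_neg at h
        exact absurd (hκn.trans_le (hkmono h)) (not_lt.2 hκ.le)
      obtain ⟨m, hnm⟩ : ∃ m, Nat.find hex = m + 1 :=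
        ⟨Nat.find hex - 1, (Nat.succ_pred_eq_of_pos (Nat.pos_of_ne_zero (by omega))).symm⟩
      rw [hnm] at hκn hn_gt
      have hm2m : m2 ≤ m := Nat.lt_succ_iff.1 hn_gt
      have hkm : k m ≤ κ := le_of_not_gt (Nat.find_min hex (hnm ▸ Nat.lt_succ_self m))
      have h1 := hdom m1 m hm1 (hm12.trans hm2m) κ hkm hκn
      have h2 := hb m hm2m
      have h3 : Rt m - Rt m1 = (Rt m - Rt m2) + (Rt m2 - Rt m1) := by ring
      calc R κ ≤ R (k m1) + J m1 + Rt m - Rt m1 := h1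
        _ = R (k m1) + J m1 + ((Rt m - Rt m2) + (Rt m2 - Rt m1)) := by ring
        _ ≤ R (k m1) + J m1 + ((M - R (k m1)) + (-J m1)) := by
              gcongr
        _ = M := by ring
  apply le_antisymm
  · exact ciSup_le hbound
  · obtain ⟨κ0, hκ0, hκ0eq⟩ := Finset.exists_mem_eq_sup'
      (Finset.nonempty_range_iff.2 (Nat.succ_ne_zero (k m2))) R
    rw [hM, hκ0eq]
    exact le_ciSup ⟨M, fun x ⟨i, hi⟩ => hi ▸ hbound i⟩ κ0
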